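/- Every prismatic graph in the class F_7 admits a hitting set of its triangles of cardinality at most 5; indeed the set of edges of K incident with a_1 is such a hitting set. -/
import Mathlib

/-- A graph is prismatic if for every triangle, every vertex not in the triangle
has exactly one neighbour in the triangle. -/
def Prismatic {V : Type*} (G : SimpleGraph V) : Prop :=
  ∀ a b c v : V, G.Adj a b → G.Adj a c → G.Adj b c →
    v ≠ a → v ≠ b → v ≠ c → ∃! u, u ∈ ({a, b, c} : Set V) ∧ G.Adj v u

/-- The six-vertex prism: vertices a₁,a₂,a₃ are 0,1,2 and b₁,b₂,b₃ are 3,4,5. -/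
def Prism6 : SimpleGraph (Fin 6) :=
  SimpleGraph.fromRel (fun u v =>
    (u.val, v.val) ∈ [(0, 1), (0, 2), (1, 2), (3, 4), (3, 5), (4, 5),
      (0, 3), (1, 4), (2, 5)])

instance : DecidableRel Prism6.Adj := fun a b =>
  decidable_of_iff _ (SimpleGraph.fromRel_adj _ a b).symm

lemma prism6_indep (u v w : Fin 6) (h1 : u ≠ v) (h2 : u ≠ w) (h3 : v ≠ w) :
    Prism6.Adj u v ∨ Prism6.Adj u w ∨ Prism6.Adj v w := by
  revert u v w; decide

lemma fin6_pigeon (a b c d e f : Fin 6) (h1:a≠0)(h2:b≠0)(h3:c≠0)(h4:d≠0)(h5:e≠0)(h6:f≠0)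
    (g1:a≠b)(g2:a≠c)(g3:a≠d)(g4:a≠e)(g5:a≠f)(g6:b≠c)(g7:b≠d)(g8:b≠e)(g9:b≠f)
    (g10:c≠d)(g11:c≠e)(g12:c≠f)(g13:d≠e)(g14:d≠f)(g15:e≠f) : False := by
  have hsub : ({a,b,c,d,e,f} : Finset (Fin 6)) ⊆ Finset.univ.erase 0 := by
    intro x hx
    simp only [Finset.mem_insert, Finset.mem_singleton] at hx
    rcases hx with rfl|rfl|rfl|rfl|rfl|rfl <;> simp [*]
  have hcard : ({a,b,c,d,e,f} : Finset (Fin 6)).card = 6 := by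
    repeat rw [Finset.card_insert_of_notMem (by simp [*])]
    simp
  have := Finset.card_le_card hsub
  rw [hcard] at this
  simp at this

lemma sym2_rep {α : Type*} (z : Sym2 α) : ∃ a b, z = s(a, b) := by
  induction z using Sym2.ind with | _ a b => exact ⟨a, b, rfl⟩

/-- Every prismatic graph in the class F₇ admits a hitting set of its triangles of
cardinality at most 5; indeed the set of edges of K incident with a₁ = 0 is such a
hitting set.  Here K is a graph on six vertices containing the six-vertex prism as a
subgraph, and the vertices of G are the edges of K together with the vertices of K
belonging to the set Vs. -/
theorem class_F7_hitting_card_le_five (K : SimpleGraph (Fin 6))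
    (hK : ∀ u v : Fin 6, Prism6.Adj u v → K.Adj u v)
    (Vs : Set (Fin 6))
    (G : SimpleGraph (↥K.edgeSet ⊕ ↥Vs))
    (hEE : ∀ e f : ↥K.edgeSet, G.Adj (Sum.inl e) (Sum.inl f) ↔
      ∀ x : Fin 6, ¬ (x ∈ (e.1 : Sym2 (Fin 6)) ∧ x ∈ (f.1 : Sym2 (Fin 6))))
    (hEV : ∀ (e : ↥K.edgeSet) (v : ↥Vs),
      G.Adj (Sum.inl e) (Sum.inr v) ↔ v.1 ∈ (e.1 : Sym2 (Fin 6)))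
    (hVV : ∀ u v : ↥Vs, G.Adj (Sum.inr u) (Sum.inr v) ↔
      (u.1 ≠ v.1 ∧ ¬ K.Adj u.1 v.1))
    (hG : Prismatic G) :
    ∃ S : Finset (↥K.edgeSet ⊕ ↥Vs), S.card ≤ 5 ∧
      (∀ w : ↥K.edgeSet ⊕ ↥Vs, w ∈ S ↔
        ∃ e : ↥K.edgeSet, (0 : Fin 6) ∈ (e.1 : Sym2 (Fin 6)) ∧ w = Sum.inl e) ∧
      ∀ p q r : ↥K.edgeSet ⊕ ↥Vs, G.Adj p q → G.Adj p r → G.Adj q r →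
        (p ∈ S ∨ q ∈ S ∨ r ∈ S) := by
  classical
  have h01 : K.Adj 0 1 := hK 0 1 (by decide)
  set d : ↥K.edgeSet ⊕ ↥Vs := Sum.inl ⟨s(0,1), (K.mem_edgeSet).mpr h01⟩ with hd
  set g : Fin 6 → (↥K.edgeSet ⊕ ↥Vs) := fun x =>
    if h : K.Adj 0 x then Sum.inl ⟨s(0,x), (K.mem_edgeSet).mpr h⟩ else d with hg
  set S : Finset (↥K.edgeSet ⊕ ↥Vs) :=
    (Finset.univ.filter fun x : Fin 6 => K.Adj 0 x).image g with hSdef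
  have hS : ∀ w : ↥K.edgeSet ⊕ ↥Vs, w ∈ S ↔
      ∃ e : ↥K.edgeSet, (0 : Fin 6) ∈ (e.1 : Sym2 (Fin 6)) ∧ w = Sum.inl e := by
    intro w
    constructor
    · intro hw
      rw [hSdef, Finset.mem_image] at hw
      obtain ⟨x, hx, hgx⟩ := hw
      rw [Finset.mem_filter] at hx
      refine ⟨⟨s(0,x), (K.mem_edgeSet).mpr hx.2⟩, by simp, ?_⟩
      rw [← hgx, hg]
      simp [hx.2]
    · rintro ⟨e, h0, rfl⟩
      obtain ⟨x, hx⟩ := Sym2.mem_iff_exists.mp h0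
      have hadj : K.Adj 0 x := by
        have := e.2
        rw [hx] at this
        exact (K.mem_edgeSet).mp this
      rw [hSdef, Finset.mem_image]
      refine ⟨x, by simp [hadj], ?_⟩
      rw [hg]
      simp only [hadj, dif_pos]
      congr 1
      exact Subtype.ext hx.symm
  refine ⟨S, ?_, hS, ?_⟩
  · calc S.card ≤ (Finset.univ.filter fun x : Fin 6 => K.Adj 0 x).card :=
          Finset.card_image_le
      _ ≤ (Finset.univ.erase (0 : Fin 6)).card := by
          apply Finset.card_le_card
          intro x hx
          rw [Finset.mem_filter] at hx
          exact Finset.mem_erase.mpr ⟨hx.2.ne', Finset.mem_univ x⟩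
      _ ≤ 5 := by simp
  · intro p q r hpq hpr hqr
    -- helper for edge-edge-vertex contradictions
    have hEEV : ∀ (e f : ↥K.edgeSet) (v : ↥Vs), G.Adj (Sum.inl e) (Sum.inl f) →
        G.Adj (Sum.inl e) (Sum.inr v) → G.Adj (Sum.inl f) (Sum.inr v) → False := by
      intro e f v hef hev hfv
      exact (hEE e f).mp hef v.1 ⟨(hEV e v).mp hev, (hEV f v).mp hfv⟩
    -- helper for edge-vertex-vertex contradictions
    have hEVV : ∀ (e : ↥K.edgeSet) (u v : ↥Vs), G.Adj (Sum.inl e) (Sum.inr u) →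
        G.Adj (Sum.inl e) (Sum.inr v) → G.Adj (Sum.inr u) (Sum.inr v) → False := by
      intro e u v heu hev huv
      obtain ⟨hne, hnadj⟩ := (hVV u v).mp huv
      have he : (e.1 : Sym2 (Fin 6)) = s(u.1, v.1) :=
        (Sym2.mem_and_mem_iff hne).mp ⟨(hEV e u).mp heu, (hEV e v).mp hev⟩
      have := e.2
      rw [he] at this
      exact hnadj ((K.mem_edgeSet).mp this)
    -- helper for vertex-vertex-vertex contradictions
    have hVVV : ∀ (u v w : ↥Vs), G.Adj (Sum.inr u) (Sum.inr v) →
        G.Adj (Sum.inr u) (Sum.inr w) → G.Adj (Sum.inr v) (Sum.inr w) → False := by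
      intro u v w huv huw hvw
      obtain ⟨h1, h1'⟩ := (hVV u v).mp huv
      obtain ⟨h2, h2'⟩ := (hVV u w).mp huw
      obtain ⟨h3, h3'⟩ := (hVV v w).mp hvw
      rcases prism6_indep u.1 v.1 w.1 h1 h2 h3 with h | h | h
      · exact h1' (hK _ _ h)
      · exact h2' (hK _ _ h)
      · exact h3' (hK _ _ h)
    rcases p with e1 | v1 <;> rcases q with e2 | v2 <;> rcases r with e3 | v3
    · -- three edges
      by_contra hcon
      push_neg at hcon
      obtain ⟨hp, hq, hr⟩ := hcon
      have h0e1 : (0 : Fin 6) ∉ (e1.1 : Sym2 (Fin 6)) :=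
        fun h0 => hp ((hS _).mpr ⟨e1, h0, rfl⟩)
      have h0e2 : (0 : Fin 6) ∉ (e2.1 : Sym2 (Fin 6)) :=
        fun h0 => hq ((hS _).mpr ⟨e2, h0, rfl⟩)
      have h0e3 : (0 : Fin 6) ∉ (e3.1 : Sym2 (Fin 6)) :=
        fun h0 => hr ((hS _).mpr ⟨e3, h0, rfl⟩)
      obtain ⟨a1, b1, he1⟩ := sym2_rep (e1.1 : Sym2 (Fin 6))
      obtain ⟨a2, b2, he2⟩ := sym2_rep (e2.1 : Sym2 (Fin 6))
      obtain ⟨a3, b3, he3⟩ := sym2_rep (e3.1 : Sym2 (Fin 6))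
      have hab1 : a1 ≠ b1 := by
        have := e1.2; rw [he1] at this; exact ((K.mem_edgeSet).mp this).ne
      have hab2 : a2 ≠ b2 := by
        have := e2.2; rw [he2] at this; exact ((K.mem_edgeSet).mp this).ne
      have hab3 : a3 ≠ b3 := by
        have := e3.2; rw [he3] at this; exact ((K.mem_edgeSet).mp this).ne
      rw [he1, Sym2.mem_iff] at h0e1
      rw [he2, Sym2.mem_iff] at h0e2
      rw [he3, Sym2.mem_iff] at h0e3
      push_neg at h0e1 h0e2 h0e3
      have h12 := (hEE e1 e2).mp hpq
      have h13 := (hEE e1 e3).mp hpr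
      have h23 := (hEE e2 e3).mp hqr
      simp only [he1, he2, he3, Sym2.mem_iff] at h12 h13 h23
      exact fin6_pigeon a1 b1 a2 b2 a3 b3
        h0e1.1.symm h0e1.2.symm h0e2.1.symm h0e2.2.symm h0e3.1.symm h0e3.2.symm
        hab1
        (fun h => h12 a1 ⟨Or.inl rfl, Or.inl h⟩)
        (fun h => h12 a1 ⟨Or.inl rfl, Or.inr h⟩)
        (fun h => h13 a1 ⟨Or.inl rfl, Or.inl h⟩)
        (fun h => h13 a1 ⟨Or.inl rfl, Or.inr h⟩)
        (fun h => h12 b1 ⟨Or.inr rfl, Or.inl h⟩)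
        (fun h => h12 b1 ⟨Or.inr rfl, Or.inr h⟩)
        (fun h => h13 b1 ⟨Or.inr rfl, Or.inl h⟩)
        (fun h => h13 b1 ⟨Or.inr rfl, Or.inr h⟩)
        hab2
        (fun h => h23 a2 ⟨Or.inl rfl, Or.inl h⟩)
        (fun h => h23 a2 ⟨Or.inl rfl, Or.inr h⟩)
        (fun h => h23 b2 ⟨Or.inr rfl, Or.inl h⟩)
        (fun h => h23 b2 ⟨Or.inr rfl, Or.inr h⟩)
        hab3
    · exact (hEEV e1 e2 v3 hpq hpr hqr).elim
    · exact (hEEV e1 e3 v2 hpr hpq hqr.symm).elim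
    · exact (hEVV e1 v2 v3 hpq hpr hqr).elim
    · exact (hEEV e2 e3 v1 hqr hpq.symm hpr.symm).elim
    · exact (hEVV e2 v1 v3 hpq.symm hqr hpr).elim
    · exact (hEVV e3 v1 v2 hpr.symm hqr.symm hpq).elim
    · exact (hVVV v1 v2 v3 hpq hpr hqr).elim
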